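/- Exponential ISS bound from a quadratic Lyapunov LMI: let P ∈ ℝ^{n×n} be symmetric positive definite, ν_1, ν_2 > 0, and M ∈ ℝ^{n×n} be such that for all e, w ∈ ℝ^n, e^T(M^T P + P M)e + 2 e^T P w ≤ −ν_1 ‖e‖² + ν_2 n ‖w‖² (where ‖·‖ is the supremum norm on ℝ^n). If ê : ℝ_{≥0} → ℝ^n is differentiable with ê'(t) = M ê(t) + w(t) and ‖w(t)‖ ≤ d_b for all t, then for all t ≥ 0: ‖ê(t)‖ ≤ √(n λ_max(P)/λ_min(P)) e^{−λ_e t/2} ‖ê(0)‖ + √(ν_2 n /(λ_min(P) λ_e)) d_b, where λ_e = ν_1/(n λ_max(P)). -/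

import Mathlib

open Matrix

/-! The Lyapunov function `V(e) = eᵀPe` is comparable to `‖e‖²`: `λmin ‖e‖² ≤ V(e) ≤ n λmax ‖e‖²`
by the spectral theorem and `‖e‖² ≤ eᵀe ≤ n ‖e‖²`. Along a solution `V̇ = eᵀ(MᵀP + PM)e + 2eᵀPw`,
so the LMI together with the upper comparison gives `V̇ ≤ -λₑ V + ν₂ n d_b²`. Grönwall's inequality
then yields `V(t) ≤ e^{-λₑ t} V(0) + ν₂ n d_b² / λₑ`, and the lower comparison with
`√(A + B) ≤ √A + √B` turns this into the bound on `‖ê(t)‖`. -/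

section Deriv

variable {𝕜 : Type*} [NontriviallyNormedField 𝕜] {ι : Type*} [Fintype ι]
  {f g : 𝕜 → ι → 𝕜} {f' g' : ι → 𝕜} {t : 𝕜}

theorem HasDerivAt.dotProduct (hf : HasDerivAt f f' t) (hg : HasDerivAt g g' t) :
    HasDerivAt (fun s => f s ⬝ᵥ g s) (f' ⬝ᵥ g t + f t ⬝ᵥ g') t := by
  simp only [_root_.dotProduct, ← Finset.sum_add_distrib]
  exact HasDerivAt.fun_sum fun i _ => (hasDerivAt_pi.1 hf i).mul (hasDerivAt_pi.1 hg i)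

theorem HasDerivAt.mulVec (A : Matrix ι ι 𝕜) (hg : HasDerivAt g g' t) :
    HasDerivAt (fun s => A *ᵥ g s) (A *ᵥ g') t :=
  hasDerivAt_pi.2 fun i => by
    have := (hasDerivAt_const t (A i)).dotProduct hg
    rwa [zero_dotProduct, zero_add] at this

end Deriv

theorem gronwallBound_le_of_neg {δ K ε : ℝ} (hK : K < 0) (hε : 0 ≤ ε) (x : ℝ) :
    gronwallBound δ K ε x ≤ δ * Real.exp (K * x) + ε / -K := by
  rw [gronwallBound_of_K_ne_0 hK.ne]
  dsimp only
  have : ε / K * (Real.exp (K * x) - 1) = ε / -K * (1 - Real.exp (K * x)) := by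
    rw [div_neg]; ring
  rw [this]
  gcongr
  exact mul_le_of_le_one_right (div_nonneg hε (neg_nonneg.2 hK.le))
    (sub_le_self _ (Real.exp_pos _).le)

theorem le_exp_mul_add_of_hasDerivAt_le {V V' : ℝ → ℝ} {k c : ℝ} (hk : 0 < k) (hc : 0 ≤ c)
    (hV : ∀ t, 0 ≤ t → HasDerivAt V (V' t) t) (hV' : ∀ t, 0 ≤ t → V' t ≤ -k * V t + c)
    {t : ℝ} (ht : 0 ≤ t) :
    V t ≤ V 0 * Real.exp (-k * t) + c / k := by
  have hgron := le_gronwallBound_of_liminf_deriv_right_le (f := V) (f' := V') (a := 0) (b := t)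
    (fun s hs => (hV s hs.1).continuousAt.continuousWithinAt)
    (fun s hs _ hr => (hV s hs.1).hasDerivWithinAt.liminf_right_slope_le hr) le_rfl
    (fun s hs => hV' s hs.1) t ⟨ht, le_rfl⟩
  rw [sub_zero] at hgron
  simpa using hgron.trans (gronwallBound_le_of_neg (neg_lt_zero.2 hk) hc t)

theorem le_sqrt_mul_add_sqrt_mul_of_sq_le {x p q u v : ℝ} (hp : 0 ≤ p) (hq : 0 ≤ q)
    (hu : 0 ≤ u) (hv : 0 ≤ v) (h : x ^ 2 ≤ p * u ^ 2 + q * v ^ 2) :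
    x ≤ √p * u + √q * v := by
  have hsq : x ^ 2 ≤ (√p * u + √q * v) ^ 2 := by
    nlinarith [Real.sq_sqrt hp, Real.sq_sqrt hq,
      mul_nonneg (mul_nonneg (Real.sqrt_nonneg p) (Real.sqrt_nonneg q)) (mul_nonneg hu hv)]
  exact (le_abs_self x).trans (abs_le_of_sq_le_sq hsq (by positivity))

theorem norm_le_of_quadratic_lyapunov {E : Type*} [SeminormedAddCommGroup E] {x : ℝ → E}
    {V V' : ℝ → ℝ} {a b k γ d : ℝ} (ha : 0 < a) (hb : 0 ≤ b) (hk : 0 < k) (hγ : 0 ≤ γ)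
    (hd : 0 ≤ d) (hV : ∀ s, 0 ≤ s → HasDerivAt V (V' s) s)
    (hV' : ∀ s, 0 ≤ s → V' s ≤ -k * V s + γ * d ^ 2)
    (hlower : ∀ s, 0 ≤ s → a * ‖x s‖ ^ 2 ≤ V s) (hupper : V 0 ≤ b * ‖x 0‖ ^ 2)
    {t : ℝ} (ht : 0 ≤ t) :
    ‖x t‖ ≤ √(b / a) * Real.exp (-k * t / 2) * ‖x 0‖ + √(γ / (a * k)) * d := by
  rw [mul_assoc (√_)]
  refine le_sqrt_mul_add_sqrt_mul_of_sq_le (by positivity) (by positivity) (by positivity) hd ?_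
  have hexp : Real.exp (-k * t / 2) ^ 2 = Real.exp (-k * t) := by
    rw [← Real.exp_nat_mul]; ring_nf
  have hdecay : a * ‖x t‖ ^ 2 ≤ b * ‖x 0‖ ^ 2 * Real.exp (-k * t) + γ * d ^ 2 / k :=
    calc a * ‖x t‖ ^ 2 ≤ V t := hlower t ht
      _ ≤ V 0 * Real.exp (-k * t) + γ * d ^ 2 / k :=
        le_exp_mul_add_of_hasDerivAt_le hk (by positivity) hV hV' ht
      _ ≤ _ := by gcongr
  rw [mul_pow, hexp]
  calc ‖x t‖ ^ 2 ≤ (b * ‖x 0‖ ^ 2 * Real.exp (-k * t) + γ * d ^ 2 / k) / a := by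
        rw [le_div_iff₀ ha]; linarith
    _ = _ := by field_simp

namespace Matrix

variable {ι : Type*} [Fintype ι]

theorem IsSymm.dotProduct_mulVec_add_dotProduct_mulVec {R : Type*} [CommRing R]
    {P : Matrix ι ι R} (hP : P.IsSymm) (M : Matrix ι ι R) (e w : ι → R) :
    (M *ᵥ e + w) ⬝ᵥ (P *ᵥ e) + e ⬝ᵥ (P *ᵥ (M *ᵥ e + w)) =
      e ⬝ᵥ ((Mᵀ * P + P * M) *ᵥ e) + 2 * (e ⬝ᵥ (P *ᵥ w)) := by
  have hMP : (M *ᵥ e) ⬝ᵥ (P *ᵥ e) = e ⬝ᵥ ((Mᵀ * P) *ᵥ e) := by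
    rw [← mulVec_mulVec, dotProduct_mulVec e, vecMul_transpose]
  have hwP : w ⬝ᵥ (P *ᵥ e) = e ⬝ᵥ (P *ᵥ w) := by
    rw [dotProduct_comm, dotProduct_mulVec, ← mulVec_transpose, hP.eq]
  rw [add_mulVec, dotProduct_add, ← hMP, ← mulVec_mulVec, mulVec_add, add_dotProduct,
    dotProduct_add, hwP]
  ring

theorem IsSymm.hasDerivAt_dotProduct_mulVec_self {P M : Matrix ι ι ℝ} (hP : P.IsSymm)
    {e : ℝ → ι → ℝ} {w : ι → ℝ} {t : ℝ} (he : HasDerivAt e (M *ᵥ e t + w) t) :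
    HasDerivAt (fun s => e s ⬝ᵥ (P *ᵥ e s))
      (e t ⬝ᵥ ((Mᵀ * P + P * M) *ᵥ e t) + 2 * (e t ⬝ᵥ (P *ᵥ w))) t := by
  rw [← hP.dotProduct_mulVec_add_dotProduct_mulVec]
  exact he.dotProduct (he.mulVec P)

theorem sq_norm_le_dotProduct_self (x : ι → ℝ) : ‖x‖ ^ 2 ≤ x ⬝ᵥ x := by
  have hsq : ∀ i, x i ^ 2 ≤ x ⬝ᵥ x := fun i => by
    simpa [sq, dotProduct] using
      Finset.single_le_sum (f := fun j => x j * x j) (fun j _ => mul_self_nonneg _)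
        (Finset.mem_univ i)
  have hnorm : ‖x‖ ≤ √(x ⬝ᵥ x) :=
    (pi_norm_le_iff_of_nonneg (Real.sqrt_nonneg _)).mpr fun i => Real.abs_le_sqrt (hsq i)
  calc ‖x‖ ^ 2 ≤ √(x ⬝ᵥ x) ^ 2 := by gcongr
    _ = x ⬝ᵥ x := Real.sq_sqrt (by simpa using dotProduct_star_self_nonneg x)

theorem dotProduct_self_le_card_mul_sq_norm (x : ι → ℝ) :
    x ⬝ᵥ x ≤ Fintype.card ι * ‖x‖ ^ 2 :=
  calc x ⬝ᵥ x = ∑ i, |x i| ^ 2 := by simp [dotProduct, sq]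
    _ ≤ ∑ _i : ι, ‖x‖ ^ 2 := Finset.sum_le_sum fun i _ => by
        gcongr; exact norm_le_pi_norm x i
    _ = Fintype.card ι * ‖x‖ ^ 2 := by simp

variable [DecidableEq ι] {A : Matrix ι ι ℝ}

namespace IsHermitian

theorem dotProduct_mulVec_self_eq_sum_eigenvalues (hA : A.IsHermitian) (x : ι → ℝ) :
    x ⬝ᵥ (A *ᵥ x) =
      ∑ i, hA.eigenvalues i * (star (↑hA.eigenvectorUnitary : Matrix ι ι ℝ) *ᵥ x) i ^ 2 := by
  set U : Matrix ι ι ℝ := (hA.eigenvectorUnitary : Matrix ι ι ℝ)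
  have hxU : x ᵥ* U = star U *ᵥ x := by
    rw [star_eq_conjTranspose, conjTranspose_eq_transpose_of_trivial, mulVec_transpose]
  conv_lhs => rw [hA.spectral_theorem, Unitary.conjStarAlgAut_apply]
  rw [← mulVec_mulVec, ← mulVec_mulVec, dotProduct_mulVec, hxU]
  simp only [mulVec_diagonal, dotProduct, Function.comp_apply, RCLike.ofReal_real_eq_id, id_eq]
  exact Finset.sum_congr rfl fun i _ => by ring

theorem dotProduct_self_star_eigenvectorUnitary_mulVec (hA : A.IsHermitian) (x : ι → ℝ) :
    (star (↑hA.eigenvectorUnitary : Matrix ι ι ℝ) *ᵥ x) ⬝ᵥ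
      (star (↑hA.eigenvectorUnitary : Matrix ι ι ℝ) *ᵥ x) = x ⬝ᵥ x := by
  set U : Matrix ι ι ℝ := (hA.eigenvectorUnitary : Matrix ι ι ℝ)
  have hUU : U * star U = 1 := Unitary.mul_star_self_of_mem hA.eigenvectorUnitary.2
  rw [star_eq_conjTranspose, conjTranspose_eq_transpose_of_trivial] at hUU ⊢
  rw [dotProduct_mulVec, ← vecMul_transpose, vecMul_vecMul, transpose_transpose, hUU,
    vecMul_one]

theorem iInf_eigenvalues_mul_dotProduct_self_le (hA : A.IsHermitian) (x : ι → ℝ) :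
    (⨅ i, hA.eigenvalues i) * (x ⬝ᵥ x) ≤ x ⬝ᵥ (A *ᵥ x) := by
  rw [hA.dotProduct_mulVec_self_eq_sum_eigenvalues,
    ← hA.dotProduct_self_star_eigenvectorUnitary_mulVec x]
  simp only [dotProduct, ← sq, Finset.mul_sum]
  exact Finset.sum_le_sum fun i _ =>
    mul_le_mul_of_nonneg_right (ciInf_le (Set.finite_range _).bddBelow i) (sq_nonneg _)

theorem dotProduct_mulVec_self_le_iSup_eigenvalues_mul (hA : A.IsHermitian) (x : ι → ℝ) :
    x ⬝ᵥ (A *ᵥ x) ≤ (⨆ i, hA.eigenvalues i) * (x ⬝ᵥ x) := by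
  rw [hA.dotProduct_mulVec_self_eq_sum_eigenvalues,
    ← hA.dotProduct_self_star_eigenvectorUnitary_mulVec x]
  simp only [dotProduct, ← sq, Finset.mul_sum]
  exact Finset.sum_le_sum fun i _ =>
    mul_le_mul_of_nonneg_right (le_ciSup (Set.finite_range _).bddAbove i) (sq_nonneg _)

theorem iInf_eigenvalues_mul_sq_norm_le (hA : A.IsHermitian) (h0 : 0 ≤ ⨅ i, hA.eigenvalues i)
    (x : ι → ℝ) : (⨅ i, hA.eigenvalues i) * ‖x‖ ^ 2 ≤ x ⬝ᵥ (A *ᵥ x) :=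
  (mul_le_mul_of_nonneg_left (sq_norm_le_dotProduct_self x) h0).trans
    (hA.iInf_eigenvalues_mul_dotProduct_self_le x)

theorem dotProduct_mulVec_self_le_card_mul_iSup_eigenvalues_mul_sq_norm (hA : A.IsHermitian)
    (h0 : 0 ≤ ⨆ i, hA.eigenvalues i) (x : ι → ℝ) :
    x ⬝ᵥ (A *ᵥ x) ≤ Fintype.card ι * (⨆ i, hA.eigenvalues i) * ‖x‖ ^ 2 :=
  calc x ⬝ᵥ (A *ᵥ x) ≤ (⨆ i, hA.eigenvalues i) * (x ⬝ᵥ x) :=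
        hA.dotProduct_mulVec_self_le_iSup_eigenvalues_mul x
    _ ≤ (⨆ i, hA.eigenvalues i) * (Fintype.card ι * ‖x‖ ^ 2) := by
        gcongr; exact dotProduct_self_le_card_mul_sq_norm x
    _ = Fintype.card ι * (⨆ i, hA.eigenvalues i) * ‖x‖ ^ 2 := by ring

end IsHermitian

theorem PosDef.iInf_eigenvalues_pos [Nonempty ι] (hA : A.PosDef) :
    0 < ⨅ i, hA.isHermitian.eigenvalues i := by
  obtain ⟨i, hi⟩ := exists_eq_ciInf_of_finite (f := hA.isHermitian.eigenvalues)
  exact hi ▸ hA.eigenvalues_pos i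

end Matrix

/-- Exponential ISS bound from a quadratic Lyapunov LMI: if
`eᵀ(MᵀP + PM)e + 2 eᵀPw ≤ -ν₁‖e‖² + ν₂ n ‖w‖²` (sup norm) and `ê' = M ê + w` with
`‖w(t)‖ ≤ d_b`, then `‖ê(t)‖ ≤ √(n λmax(P)/λmin(P)) e^{-λₑt/2} ‖ê(0)‖ +
√(ν₂ n/(λmin(P) λₑ)) d_b` with `λₑ = ν₁/(n λmax(P))`. -/
theorem iss_bound_from_lyapunov_lmi (n : ℕ) (hn : 0 < n)
    (P M : Matrix (Fin n) (Fin n) ℝ) (hH : P.IsHermitian) (hP : P.PosDef)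
    (ν1 ν2 db : ℝ) (hν1 : 0 < ν1) (hν2 : 0 < ν2) (hdb : 0 ≤ db)
    (hLMI : ∀ e w : Fin n → ℝ,
      e ⬝ᵥ ((Mᵀ * P + P * M) *ᵥ e) + 2 * (e ⬝ᵥ (P *ᵥ w))
        ≤ -ν1 * ‖e‖ ^ 2 + ν2 * n * ‖w‖ ^ 2)
    (eh w : ℝ → Fin n → ℝ)
    (hde : ∀ t : ℝ, 0 ≤ t → HasDerivAt eh (M *ᵥ eh t + w t) t)
    (hw : ∀ t : ℝ, 0 ≤ t → ‖w t‖ ≤ db) :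
    ∀ t : ℝ, 0 ≤ t →
      ‖eh t‖ ≤ Real.sqrt ((n : ℝ) * (⨆ i, hH.eigenvalues i) / (⨅ i, hH.eigenvalues i))
          * Real.exp (-(ν1 / ((n : ℝ) * ⨆ i, hH.eigenvalues i)) * t / 2) * ‖eh 0‖
        + Real.sqrt (ν2 * n /
            ((⨅ i, hH.eigenvalues i) * (ν1 / ((n : ℝ) * ⨆ i, hH.eigenvalues i)))) * db := by
  intro t ht
  have : Nonempty (Fin n) := ⟨⟨0, hn⟩⟩
  set lmin := ⨅ i, hH.eigenvalues i
  set lmax := ⨆ i, hH.eigenvalues i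
  have hmin : 0 < lmin := hP.iInf_eigenvalues_pos
  have hmax : 0 < lmax :=
    hmin.trans_le (ciInf_le_ciSup (Set.finite_range _).bddBelow (Set.finite_range _).bddAbove)
  have hV_le (x : Fin n → ℝ) : x ⬝ᵥ (P *ᵥ x) ≤ n * lmax * ‖x‖ ^ 2 := by
    simpa using hH.dotProduct_mulVec_self_le_card_mul_iSup_eigenvalues_mul_sq_norm hmax.le x
  have hPsymm : P.IsSymm := (conjTranspose_eq_transpose_of_trivial P).symm.trans hH
  have hV_decay (s : ℝ) (hs : 0 ≤ s) :
      eh s ⬝ᵥ ((Mᵀ * P + P * M) *ᵥ eh s) + 2 * (eh s ⬝ᵥ (P *ᵥ w s))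
        ≤ -(ν1 / (n * lmax)) * (eh s ⬝ᵥ (P *ᵥ eh s)) + ν2 * n * db ^ 2 := by
    have hV : ν1 / (n * lmax) * (eh s ⬝ᵥ (P *ᵥ eh s)) ≤ ν1 * ‖eh s‖ ^ 2 := by
      calc _ ≤ ν1 / (n * lmax) * (n * lmax * ‖eh s‖ ^ 2) := by gcongr; exact hV_le _
        _ = ν1 * ‖eh s‖ ^ 2 := by field_simp
    have hw' : ν2 * n * ‖w s‖ ^ 2 ≤ ν2 * n * db ^ 2 := by gcongr; exact hw s hs
    linarith [hLMI (eh s) (w s)]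
  exact norm_le_of_quadratic_lyapunov hmin (by positivity) (by positivity) (by positivity) hdb
    (fun s hs => hPsymm.hasDerivAt_dotProduct_mulVec_self (hde s hs)) hV_decay
    (fun s _ => hH.iInf_eigenvalues_mul_sq_norm_le hmin.le _) (hV_le _) ht
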